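/- Let G be a nontrivial connected graph of order n with girth g ≥ 6 and minimum degree δ ≥ 2. Then γ_{tR2}(G) ≤ n + 2 − (Δ + δ), where Δ is the maximum degree. -/

import Mathlib

/-- `f` is a total Roman {2}-dominating function on `G`. -/
def IsTR2DF {V : Type*} (G : SimpleGraph V) (f : V → ℕ) : Prop :=
  (∀ v, f v ≤ 2) ∧
  (∀ v, f v = 0 →
    (∃ u, G.Adj u v ∧ f u = 2) ∨
    (∃ x y, x ≠ y ∧ G.Adj x v ∧ G.Adj y v ∧ f x = 1 ∧ f y = 1)) ∧
  (∀ v, 0 < f v → ∃ u, G.Adj u v ∧ 0 < f u)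

/-- The total Roman {2}-domination number of `G`. -/
noncomputable def tR2 {V : Type*} [Fintype V] (G : SimpleGraph V) : ℕ :=
  sInf {w | ∃ f : V → ℕ, IsTR2DF G f ∧ ∑ v, f v = w}

/-!
Take a vertex `v` of maximum degree and a neighbour `u`, and let `Z = (N(v) ∪ N(u)) \ {u, v}`.
As `G` has no triangle, `|Z| = Δ + deg u - 2`, so the function that is `0` on `Z` and `1`
elsewhere has weight `n + 2 - (Δ + deg u) ≤ n + 2 - (Δ + δ)`.
It is a TR2DF because girth `≥ 6` rules out every short cycle through `uv` that would break it:
a vertex `w ∈ N(v) \ {u}` has `v` and a second neighbour `y ≠ v`, and `y ∉ Z` (else a 3- or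
4-cycle); a vertex `w ∉ Z ∪ {u, v}` cannot have two neighbours in `Z` (else a 4- or 5-cycle), so
since `δ ≥ 2` it has a neighbour valued `1`.
-/

lemma tR2_le_sum {V : Type*} [Fintype V] {G : SimpleGraph V} {f : V → ℕ} (hf : IsTR2DF G f) :
    tR2 G ≤ ∑ v, f v :=
  Nat.sInf_le ⟨f, hf, rfl⟩

namespace SimpleGraph

open Finset

variable {V : Type*} {G : SimpleGraph V}

section Girth

variable {a b c d e : V}

lemma not_adj_of_four_le_girth (hg : 4 ≤ G.girth) (hab : G.Adj a b) (hbc : G.Adj b c) :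
    ¬ G.Adj c a := fun hca => by
  have hcycle : (Walk.cons hab (Walk.cons hbc (Walk.cons hca Walk.nil))).IsCycle := by
    simp_all [Walk.isCycle_def, Walk.isTrail_def, hab.ne, hbc.ne, hca.ne, hab.ne', hca.ne']
  have := hg.trans (girth_le_length hcycle)
  simp at this

lemma not_adj_of_five_le_girth (hg : 5 ≤ G.girth) (hab : G.Adj a b) (hbc : G.Adj b c)
    (hcd : G.Adj c d) (hac : a ≠ c) (hbd : b ≠ d) : ¬ G.Adj d a := fun hda => by
  have hcycle : (Walk.cons hab (Walk.cons hbc (Walk.cons hcd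
      (Walk.cons hda Walk.nil)))).IsCycle := by
    simp_all [Walk.isCycle_def, Walk.isTrail_def, hab.ne, hbc.ne, hcd.ne, hda.ne, hab.ne', hda.ne',
      hac.symm]
  have := hg.trans (girth_le_length hcycle)
  simp at this

lemma not_adj_of_six_le_girth (hg : 6 ≤ G.girth) (hab : G.Adj a b) (hbc : G.Adj b c)
    (hcd : G.Adj c d) (hde : G.Adj d e) (hac : a ≠ c) (had : a ≠ d) (hbd : b ≠ d)
    (hbe : b ≠ e) (hce : c ≠ e) : ¬ G.Adj e a := fun hea => by
  have hcycle : (Walk.cons hab (Walk.cons hbc (Walk.cons hcd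
      (Walk.cons hde (Walk.cons hea Walk.nil))))).IsCycle := by
    simp_all [Walk.isCycle_def, Walk.isTrail_def, hab.ne, hbc.ne, hcd.ne, hde.ne, hea.ne, hab.ne',
      hea.ne', hac.symm, had.symm]
  have := hg.trans (girth_le_length hcycle)
  simp at this

end Girth

variable [Fintype V] [DecidableRel G.Adj]

lemma exists_adj_ne_of_two_le_minDegree (hδ : 2 ≤ G.minDegree) (w x : V) :
    ∃ y, G.Adj w y ∧ y ≠ x := by
  have hcard : 1 < #(G.neighborFinset w) := by
    rw [card_neighborFinset_eq_degree]
    exact hδ.trans (G.minDegree_le_degree w)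
  obtain ⟨y, hy, hyx⟩ := exists_mem_ne hcard x
  exact ⟨y, (mem_neighborFinset G w y).mp hy, hyx⟩

variable [DecidableEq V]

variable (G) in
def edgeNeighborFinset (v u : V) : Finset V :=
  (G.neighborFinset v \ {u}) ∪ (G.neighborFinset u \ {v})

lemma mem_edgeNeighborFinset {v u w : V} :
    w ∈ G.edgeNeighborFinset v u ↔ (G.Adj v w ∧ w ≠ u) ∨ (G.Adj u w ∧ w ≠ v) := by
  simp [edgeNeighborFinset]

lemma edgeNeighborFinset_comm (v u : V) : G.edgeNeighborFinset v u = G.edgeNeighborFinset u v :=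
  union_comm _ _

lemma left_notMem_edgeNeighborFinset (v u : V) : v ∉ G.edgeNeighborFinset v u := by
  simp [mem_edgeNeighborFinset]

lemma card_edgeNeighborFinset_add_two (hg : 4 ≤ G.girth) {v u : V} (hvu : G.Adj v u) :
    #(G.edgeNeighborFinset v u) + 2 = G.degree v + G.degree u := by
  have hdisj : Disjoint (G.neighborFinset v \ {u}) (G.neighborFinset u \ {v}) := by
    refine Finset.disjoint_left.mpr fun w hvw huw => ?_
    simp only [mem_sdiff, mem_neighborFinset] at hvw huw
    exact not_adj_of_four_le_girth hg hvu huw.1 hvw.1.symm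
  have hv : 1 ≤ G.degree v := G.degree_pos_iff_exists_adj v |>.mpr ⟨u, hvu⟩
  have hu : 1 ≤ G.degree u := G.degree_pos_iff_exists_adj u |>.mpr ⟨v, hvu.symm⟩
  rw [edgeNeighborFinset, card_union_of_disjoint hdisj,
    card_sdiff_of_subset (by simpa using hvu), card_sdiff_of_subset (by simpa using hvu.symm),
    card_neighborFinset_eq_degree, card_neighborFinset_eq_degree, card_singleton, card_singleton]
  omega

variable (G) in
def edgeTR2DF (v u : V) (w : V) : ℕ :=
  if w ∈ G.edgeNeighborFinset v u then 0 else 1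

lemma edgeTR2DF_comm (v u : V) : G.edgeTR2DF v u = G.edgeTR2DF u v := by
  unfold edgeTR2DF
  rw [edgeNeighborFinset_comm]

lemma sum_edgeTR2DF_add_card (v u : V) :
    ∑ w, G.edgeTR2DF v u w + #(G.edgeNeighborFinset v u) = Fintype.card V := by
  simp only [edgeTR2DF]
  rw [sum_ite, sum_const_zero, zero_add, sum_const, smul_eq_mul, mul_one, filter_not,
    filter_mem_eq_inter, univ_inter, card_univ_sdiff]
  have := (G.edgeNeighborFinset v u).card_le_univ
  omega

lemma edgeTR2DF_eq_one {v u w : V} (hw : w ∉ G.edgeNeighborFinset v u) :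
    G.edgeTR2DF v u w = 1 := if_neg hw

lemma edgeTR2DF_left_eq_one (v u : V) : G.edgeTR2DF v u v = 1 :=
  edgeTR2DF_eq_one (left_notMem_edgeNeighborFinset v u)

lemma notMem_edgeNeighborFinset_of_adj_of_adj (hg : 5 ≤ G.girth) {v u w y : V}
    (hvu : G.Adj v u) (hvw : G.Adj v w) (hwu : w ≠ u) (hwy : G.Adj w y) (hyv : y ≠ v) :
    y ∉ G.edgeNeighborFinset v u := by
  rw [mem_edgeNeighborFinset]
  rintro (⟨hvy, -⟩ | ⟨huy, -⟩)
  · exact not_adj_of_four_le_girth (by omega) hvw hwy hvy.symm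
  · exact not_adj_of_five_le_girth hg hvw hwy huy.symm (Ne.symm hyv) hwu hvu.symm

lemma exists_two_adj_edgeTR2DF_eq_one (hg : 5 ≤ G.girth) (hδ : 2 ≤ G.minDegree) {v u w : V}
    (hvu : G.Adj v u) (hvw : G.Adj v w) (hwu : w ≠ u) :
    ∃ x y, x ≠ y ∧ G.Adj x w ∧ G.Adj y w ∧ G.edgeTR2DF v u x = 1 ∧ G.edgeTR2DF v u y = 1 := by
  obtain ⟨y, hwy, hyv⟩ := exists_adj_ne_of_two_le_minDegree hδ w v
  exact ⟨v, y, hyv.symm, hvw, hwy.symm, edgeTR2DF_left_eq_one v u,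
    edgeTR2DF_eq_one (notMem_edgeNeighborFinset_of_adj_of_adj hg hvu hvw hwu hwy hyv)⟩

lemma not_adj_mem_edgeNeighborFinset_pair (hg : 6 ≤ G.girth) {v u w y₁ y₂ : V}
    (hvu : G.Adj v u) (hwv : w ≠ v) (hwu : w ≠ u) (hy : y₁ ≠ y₂) (hwy₁ : G.Adj w y₁)
    (hwy₂ : G.Adj w y₂) (hy₁ : y₁ ∈ G.edgeNeighborFinset v u)
    (hy₂ : y₂ ∈ G.edgeNeighborFinset v u) : False := by
  rw [mem_edgeNeighborFinset] at hy₁ hy₂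
  rcases hy₁ with ⟨hvy₁, hy₁u⟩ | ⟨huy₁, hy₁v⟩ <;> rcases hy₂ with ⟨hvy₂, hy₂u⟩ | ⟨huy₂, hy₂v⟩
  · exact not_adj_of_five_le_girth (by omega) hvy₁ hwy₁.symm hwy₂ hwv.symm hy hvy₂.symm
  · exact not_adj_of_six_le_girth hg hvy₁ hwy₁.symm hwy₂ huy₂.symm hwv.symm hy₂v.symm hy hy₁u
      hwu hvu.symm
  · exact not_adj_of_six_le_girth hg hvy₂ hwy₂.symm hwy₁ huy₁.symm hwv.symm hy₁v.symm hy.symm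
      hy₂u hwu hvu.symm
  · exact not_adj_of_five_le_girth (by omega) huy₁ hwy₁.symm hwy₂ hwu.symm hy huy₂.symm

lemma exists_adj_edgeTR2DF_pos (hg : 6 ≤ G.girth) (hδ : 2 ≤ G.minDegree) {v u : V}
    (hvu : G.Adj v u) (w : V) : ∃ x, G.Adj x w ∧ 0 < G.edgeTR2DF v u x := by
  by_cases hwv : w = v
  · subst hwv
    exact ⟨u, hvu.symm, by rw [edgeTR2DF_comm, edgeTR2DF_left_eq_one]; omega⟩
  by_cases hwu : w = u
  · subst hwu
    exact ⟨v, hvu, by rw [edgeTR2DF_left_eq_one]; omega⟩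
  by_contra! hzero
  obtain ⟨y₁, hwy₁, -⟩ := exists_adj_ne_of_two_le_minDegree hδ w w
  obtain ⟨y₂, hwy₂, hy⟩ := exists_adj_ne_of_two_le_minDegree hδ w y₁
  have hmem : ∀ y, G.Adj w y → y ∈ G.edgeNeighborFinset v u := fun y hwy => by
    by_contra hy
    have := hzero y hwy.symm
    rw [edgeTR2DF_eq_one hy] at this
    omega
  exact not_adj_mem_edgeNeighborFinset_pair hg hvu hwv hwu hy.symm hwy₁ hwy₂
    (hmem y₁ hwy₁) (hmem y₂ hwy₂)

lemma isTR2DF_edgeTR2DF (hg : 6 ≤ G.girth) (hδ : 2 ≤ G.minDegree) {v u : V}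
    (hvu : G.Adj v u) : IsTR2DF G (G.edgeTR2DF v u) := by
  refine ⟨fun w => by unfold edgeTR2DF; split <;> omega, fun w hw => Or.inr ?_,
    fun w _ => exists_adj_edgeTR2DF_pos hg hδ hvu w⟩
  have hwZ : w ∈ G.edgeNeighborFinset v u := by
    by_contra h
    rw [edgeTR2DF_eq_one h] at hw
    omega
  rcases mem_edgeNeighborFinset.mp hwZ with ⟨hvw, hwu⟩ | ⟨huw, hwv⟩
  · exact exists_two_adj_edgeTR2DF_eq_one (by omega) hδ hvu hvw hwu
  · rw [edgeTR2DF_comm]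
    exact exists_two_adj_edgeTR2DF_eq_one (by omega) hδ hvu.symm huw hwv

end SimpleGraph

open SimpleGraph

theorem stmt11_general {V : Type*} [Fintype V] (G : SimpleGraph V) [DecidableRel G.Adj]
    (hg : 6 ≤ G.girth) (hδ : 2 ≤ G.minDegree) :
    tR2 G + (G.maxDegree + G.minDegree) ≤ Fintype.card V + 2 := by
  classical
  have : Nonempty V := by
    by_contra hempty
    have : IsEmpty V := not_nonempty_iff.mp hempty
    rw [minDegree_of_subsingleton] at hδ
    omega
  obtain ⟨v, hv⟩ := G.exists_maximal_degree_vertex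
  obtain ⟨u, hvu, -⟩ := exists_adj_ne_of_two_le_minDegree hδ v v
  have hweight := tR2_le_sum (isTR2DF_edgeTR2DF hg hδ hvu)
  have hsum := G.sum_edgeTR2DF_add_card v u
  have hcard := card_edgeNeighborFinset_add_two (by omega) hvu
  have hδu := G.minDegree_le_degree u
  omega

theorem stmt11 {V : Type*} [Fintype V] (G : SimpleGraph V) [DecidableRel G.Adj]
    (hconn : G.Connected) (hnt : Nontrivial V)
    (hg : 6 ≤ G.girth) (hδ : 2 ≤ G.minDegree) :
    tR2 G + (G.maxDegree + G.minDegree) ≤ Fintype.card V + 2 :=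
  stmt11_general G hg hδ
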